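/- arXiv:2511.16305 — 3 statements merged into one kernel-verified Lean document; each statement's English description precedes it below -/
import Mathlib

section
/- Let u : ℝ² → ℝ⁴ be a C² immersion with orthonormal normal fields E¹, E² ∈ C¹(ℝ², ℝ⁴), i.e. (∇u)ᵀE¹ = (∇u)ᵀE² = 0, |E¹| = |E²| = 1, ⟨E¹,E²⟩ = 0. For a unit vector η ∈ ℝ², set t = ⟨x,η⟩, Γ(t) = sin t, Γ̄(t) = cos t. For λ > 0 and a ∈ C¹(ℝ², ℝ), define ũ(x) = u(x) + (Γ(λt)/λ) a(x) E¹(x) + (Γ̄(λt)/λ) a(x) E²(x). Then (∇ũ)ᵀ∇ũ − (∇u)ᵀ∇u = a² η⊗η + R, where every term of the remainder R carries at least one factor of 1/λ; explicitly, R equals the sum of the terms 2(Γ(λt)/λ) a sym((∇u)ᵀ∇E¹) + 2(Γ̄(λt)/λ) a sym((∇u)ᵀ∇E²) + (2/λ) a² sym((∇E²)ᵀE¹ ⊗ η) + (Γ(λt)²/λ²) a² (∇E¹)ᵀ∇E¹ + (Γ̄(λt)²/λ²) a² (∇E²)ᵀ∇E² + 2(Γ(λt)Γ̄(λt)/λ²)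 a² sym((∇E¹)ᵀ∇E²) + (1/λ²) ∇a⊗∇a. -/
/-- Partial derivative `∂ᵢ f` of a map `ℝ² → ℝ⁴`. -/
noncomputable def pd4 (f : (Fin 2 → ℝ) → (Fin 4 → ℝ)) (x : Fin 2 → ℝ) (i : Fin 2) :
    Fin 4 → ℝ :=
  fderiv ℝ f x (Pi.single i 1)

/-- Partial derivative `∂ᵢ a` of a scalar function on `ℝ²`. -/
noncomputable def pdS (a : (Fin 2 → ℝ) → ℝ) (x : Fin 2 → ℝ) (i : Fin 2) : ℝ :=
  fderiv ℝ a x (Pi.single i 1)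

/-- The 2×2 matrix field `(∇f)ᵀ∇g` with entries `⟨∂ᵢf, ∂ⱼg⟩`. -/
noncomputable def gramFG (f g : (Fin 2 → ℝ) → (Fin 4 → ℝ)) (x : Fin 2 → ℝ) :
    Fin 2 → Fin 2 → ℝ :=
  fun i j => ∑ k, pd4 f x i k * pd4 g x j k

/-- Symmetrization `sym M = (M + Mᵀ)/2` of a 2×2 matrix. -/
noncomputable def symM (M : Fin 2 → Fin 2 → ℝ) : Fin 2 → Fin 2 → ℝ :=
  fun i j => (M i j + M j i) / 2

/-- Outer product `v ⊗ w`. -/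
noncomputable def outerM (v w : Fin 2 → ℝ) : Fin 2 → Fin 2 → ℝ :=
  fun i j => v i * w j

/-- Nash's spiral perturbation:
`ũ = u + (Γ(λt)/λ) a E¹ + (Γ̄(λt)/λ) a E²` with `Γ = sin`, `Γ̄ = cos`, `t = ⟨x, η⟩`. -/
noncomputable def nashSpiral (u E1 E2 : (Fin 2 → ℝ) → (Fin 4 → ℝ))
    (a : (Fin 2 → ℝ) → ℝ) (η : Fin 2 → ℝ) (l : ℝ) :
    (Fin 2 → ℝ) → (Fin 4 → ℝ) :=
  fun x k => u x k + Real.sin (l * ∑ i, x i * η i) / l * a x * E1 x k +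
    Real.cos (l * ∑ i, x i * η i) / l * a x * E2 x k

/-!
Differentiating `ũ = u + (Γ(λt)/λ) a E¹ + (Γ̄(λt)/λ) a E²` gives
`∂ᵢũ = ∂ᵢu + (Γ'(λt) ηᵢ a + (Γ(λt)/λ) ∂ᵢa) E¹ + (Γ̄'(λt) ηᵢ a + (Γ̄(λt)/λ) ∂ᵢa) E²
  + (Γ(λt)/λ) a ∂ᵢE¹ + (Γ̄(λt)/λ) a ∂ᵢE²`.
Differentiating the orthonormality relations gives `⟨∂ᵢE¹, E¹⟩ = ⟨∂ᵢE², E²⟩ = 0` and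
`⟨∂ᵢE¹, E²⟩ = -⟨∂ᵢE², E¹⟩`. Expanding `⟨∂ᵢũ, ∂ⱼũ⟩`, normality of `E¹, E²` kills their products
with `∇u`, and the remaining products of normal components collapse by `Γ² + Γ̄² = 1`,
`ΓΓ' + Γ̄Γ̄' = 0` and `Γ'Γ̄ - ΓΓ̄' = 1`.
-/

open Matrix

lemma gramFG_apply (f g : (Fin 2 → ℝ) → (Fin 4 → ℝ)) (x : Fin 2 → ℝ) (i j : Fin 2) :
    gramFG f g x i j = pd4 f x i ⬝ᵥ pd4 g x j := rfl

section PartialDerivatives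

variable {x : Fin 2 → ℝ} {i : Fin 2}

lemma pd4_add {f g : (Fin 2 → ℝ) → (Fin 4 → ℝ)} (hf : DifferentiableAt ℝ f x)
    (hg : DifferentiableAt ℝ g x) :
    pd4 (fun y => f y + g y) x i = pd4 f x i + pd4 g x i := by
  simp [pd4, fderiv_fun_add hf hg]

lemma pd4_smul {c : (Fin 2 → ℝ) → ℝ} {f : (Fin 2 → ℝ) → (Fin 4 → ℝ)}
    (hc : DifferentiableAt ℝ c x) (hf : DifferentiableAt ℝ f x) :
    pd4 (fun y => c y • f y) x i = c x • pd4 f x i + pdS c x i • f x := by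
  simp [pd4, pdS, fderiv_fun_smul hc hf]

lemma pdS_mul {c d : (Fin 2 → ℝ) → ℝ} (hc : DifferentiableAt ℝ c x)
    (hd : DifferentiableAt ℝ d x) :
    pdS (fun y => c y * d y) x i = c x * pdS d x i + pdS c x i * d x := by
  simp [pdS, fderiv_fun_mul hc hd, mul_comm]

lemma pdS_dotProduct {f g : (Fin 2 → ℝ) → (Fin 4 → ℝ)} (hf : DifferentiableAt ℝ f x)
    (hg : DifferentiableAt ℝ g x) :
    pdS (fun y => f y ⬝ᵥ g y) x i = pd4 f x i ⬝ᵥ g x + f x ⬝ᵥ pd4 g x i := by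
  have h := HasFDerivAt.fun_sum fun k (_ : k ∈ Finset.univ) =>
    (hasFDerivAt_pi'.1 hf.hasFDerivAt k).fun_mul (hasFDerivAt_pi'.1 hg.hasFDerivAt k)
  rw [pdS, show (fun y => f y ⬝ᵥ g y) = fun y => ∑ k, f y k * g y k from rfl, h.fderiv]
  simp [dotProduct, pd4, Finset.sum_add_distrib, mul_comm, add_comm]

lemma pd4_dotProduct_eq_neg_of_dotProduct_const {f g : (Fin 2 → ℝ) → (Fin 4 → ℝ)}
    (hf : Differentiable ℝ f) (hg : Differentiable ℝ g) {c : ℝ} (h : ∀ y, f y ⬝ᵥ g y = c) :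
    pd4 f x i ⬝ᵥ g x = -(pd4 g x i ⬝ᵥ f x) := by
  have hderiv : pd4 f x i ⬝ᵥ g x + f x ⬝ᵥ pd4 g x i = 0 := by
    rw [← pdS_dotProduct (hf x) (hg x), funext h]
    simp [pdS]
  rw [dotProduct_comm (f x)] at hderiv
  linarith

lemma pd4_dotProduct_self_eq_zero {f : (Fin 2 → ℝ) → (Fin 4 → ℝ)} (hf : Differentiable ℝ f)
    {c : ℝ} (h : ∀ y, f y ⬝ᵥ f y = c) : pd4 f x i ⬝ᵥ f x = 0 := by
  linarith [pd4_dotProduct_eq_neg_of_dotProduct_const (x := x) (i := i) hf hf h]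

lemma pdS_sum_mul_const (η : Fin 2 → ℝ) : pdS (fun y => ∑ j, y j * η j) x i = η i := by
  rw [pdS, (HasFDerivAt.fun_sum fun j _ => (hasFDerivAt_apply j x).mul_const (η j)).fderiv]
  simp [Pi.single_apply, -Fin.sum_univ_two]

lemma pdS_sin_div (η : Fin 2 → ℝ) {l : ℝ} (hl : l ≠ 0) :
    pdS (fun y => Real.sin (l * ∑ j, y j * η j) / l) x i =
      Real.cos (l * ∑ j, x j * η j) * η i := by
  have ht : DifferentiableAt ℝ (fun y : Fin 2 → ℝ => ∑ j, y j * η j) x := by fun_prop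
  simp_rw [pdS, div_eq_mul_inv]
  rw [(((ht.hasFDerivAt.const_mul l).sin).mul_const l⁻¹).fderiv]
  simp only [_root_.smul_apply, smul_eq_mul]
  rw [← pdS, pdS_sum_mul_const]
  field_simp

lemma pdS_cos_div (η : Fin 2 → ℝ) {l : ℝ} (hl : l ≠ 0) :
    pdS (fun y => Real.cos (l * ∑ j, y j * η j) / l) x i =
      -Real.sin (l * ∑ j, x j * η j) * η i := by
  have ht : DifferentiableAt ℝ (fun y : Fin 2 → ℝ => ∑ j, y j * η j) x := by fun_prop
  simp_rw [pdS, div_eq_mul_inv]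
  rw [(((ht.hasFDerivAt.const_mul l).cos).mul_const l⁻¹).fderiv]
  simp only [_root_.smul_apply, smul_eq_mul]
  rw [← pdS, pdS_sum_mul_const]
  field_simp

end PartialDerivatives

lemma pd4_nashSpiral {u E1 E2 : (Fin 2 → ℝ) → (Fin 4 → ℝ)} {a : (Fin 2 → ℝ) → ℝ}
    (η : Fin 2 → ℝ) {l : ℝ} (hu : Differentiable ℝ u) (hE1 : Differentiable ℝ E1)
    (hE2 : Differentiable ℝ E2) (ha : Differentiable ℝ a) (hl : l ≠ 0) (x : Fin 2 → ℝ)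
    (i : Fin 2) :
    pd4 (nashSpiral u E1 E2 a η l) x i = pd4 u x i
      + (Real.sin (l * ∑ j, x j * η j) / l * a x) • pd4 E1 x i
      + (Real.sin (l * ∑ j, x j * η j) / l * pdS a x i
          + Real.cos (l * ∑ j, x j * η j) * η i * a x) • E1 x
      + (Real.cos (l * ∑ j, x j * η j) / l * a x) • pd4 E2 x i
      + (Real.cos (l * ∑ j, x j * η j) / l * pdS a x i
          - Real.sin (l * ∑ j, x j * η j) * η i * a x) • E2 x := by
  change pd4 (fun y => u y + (Real.sin (l * ∑ j, y j * η j) / l * a y) • E1 y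
    + (Real.cos (l * ∑ j, y j * η j) / l * a y) • E2 y) x i = _
  rw [pd4_add (by fun_prop) (by fun_prop), pd4_add (hu x) (by fun_prop),
    pd4_smul (by fun_prop) (hE1 x), pd4_smul (by fun_prop) (hE2 x), pdS_mul (by fun_prop) (ha x),
    pdS_mul (by fun_prop) (ha x), pdS_sin_div η hl, pdS_cos_div η hl]
  module

theorem stmt4_general (u E1 E2 : (Fin 2 → ℝ) → (Fin 4 → ℝ)) (a : (Fin 2 → ℝ) → ℝ)
    (η : Fin 2 → ℝ) (l : ℝ)
    (hu : ContDiff ℝ 2 u) (hE1 : ContDiff ℝ 1 E1) (hE2 : ContDiff ℝ 1 E2)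
    (ha : ContDiff ℝ 1 a)
    (hE1n : ∀ x, ∀ i, ∑ k, pd4 u x i k * E1 x k = 0)
    (hE2n : ∀ x, ∀ i, ∑ k, pd4 u x i k * E2 x k = 0)
    (hE1u : ∀ x, ∑ k, (E1 x k) ^ 2 = 1) (hE2u : ∀ x, ∑ k, (E2 x k) ^ 2 = 1)
    (hE12 : ∀ x, ∑ k, E1 x k * E2 x k = 0)
    (hl : 0 < l) :
    ∀ x : Fin 2 → ℝ,
      gramFG (nashSpiral u E1 E2 a η l) (nashSpiral u E1 E2 a η l) x - gramFG u u x
      = (a x) ^ 2 • outerM η η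
        -- the remainder R, each of whose terms carries at least one factor 1/λ:
        + (2 * Real.sin (l * ∑ i, x i * η i) / l * a x) • symM (gramFG u E1 x)
        + (2 * Real.cos (l * ∑ i, x i * η i) / l * a x) • symM (gramFG u E2 x)
        + (2 / l * (a x) ^ 2) •
            symM (outerM (fun i => ∑ k, pd4 E2 x i k * E1 x k) η)
        + ((Real.sin (l * ∑ i, x i * η i)) ^ 2 / l ^ 2 * (a x) ^ 2) • gramFG E1 E1 x
        + ((Real.cos (l * ∑ i, x i * η i)) ^ 2 / l ^ 2 * (a x) ^ 2) • gramFG E2 E2 x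
        + (2 * Real.sin (l * ∑ i, x i * η i) * Real.cos (l * ∑ i, x i * η i) / l ^ 2 *
            (a x) ^ 2) • symM (gramFG E1 E2 x)
        + (1 / l ^ 2) • outerM (pdS a x) (pdS a x) := by
  intro x
  have hE1d := hE1.differentiable one_ne_zero
  have hE2d := hE2.differentiable one_ne_zero
  have hE11 : ∀ y, E1 y ⬝ᵥ E1 y = 1 := fun y => by simpa [dotProduct, sq] using hE1u y
  have hE22 : ∀ y, E2 y ⬝ᵥ E2 y = 1 := fun y => by simpa [dotProduct, sq] using hE2u y
  have hE21 : E2 x ⬝ᵥ E1 x = 0 := by rw [dotProduct_comm]; exact hE12 x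
  have hU1 : ∀ i, pd4 u x i ⬝ᵥ E1 x = 0 := hE1n x
  have hU2 : ∀ i, pd4 u x i ⬝ᵥ E2 x = 0 := hE2n x
  have hD11 i : pd4 E1 x i ⬝ᵥ E1 x = 0 := pd4_dotProduct_self_eq_zero hE1d hE11
  have hD22 i : pd4 E2 x i ⬝ᵥ E2 x = 0 := pd4_dotProduct_self_eq_zero hE2d hE22
  have hD12 i : pd4 E1 x i ⬝ᵥ E2 x = -(pd4 E2 x i ⬝ᵥ E1 x) :=
    pd4_dotProduct_eq_neg_of_dotProduct_const hE1d hE2d hE12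
  rw [show (fun i => ∑ k, pd4 E2 x i k * E1 x k) = fun i => pd4 E2 x i ⬝ᵥ E1 x from rfl]
  ext i j
  simp only [Pi.sub_apply, Pi.add_apply, Pi.smul_apply, smul_eq_mul, symM, outerM, gramFG_apply,
    pd4_nashSpiral η (hu.differentiable two_ne_zero) hE1d hE2d (ha.differentiable one_ne_zero)
      hl.ne']
  simp only [add_dotProduct, dotProduct_add, smul_dotProduct, dotProduct_smul, smul_eq_mul]
  simp only [hE11, hE22, show E1 x ⬝ᵥ E2 x = 0 from hE12 x, hE21]
  -- with the `Eᵢ ⬝ᵥ Eⱼ` terms gone, moving every normal field to the right terminates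
  simp only [dotProduct_comm (E1 x), dotProduct_comm (E2 x)]
  simp only [hU1, hU2, hD11, hD22, hD12]
  rw [dotProduct_comm (pd4 E1 x i) (pd4 u x j), dotProduct_comm (pd4 E2 x i) (pd4 u x j),
    dotProduct_comm (pd4 E2 x i) (pd4 E1 x j)]
  linear_combination (a x ^ 2 * η i * η j + pdS a x i * pdS a x j / l ^ 2
    + a x ^ 2 / l * (η i * (pd4 E2 x j ⬝ᵥ E1 x) + η j * (pd4 E2 x i ⬝ᵥ E1 x)))
    * Real.sin_sq_add_cos_sq (l * ∑ i, x i * η i)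

theorem stmt4 (u E1 E2 : (Fin 2 → ℝ) → (Fin 4 → ℝ)) (a : (Fin 2 → ℝ) → ℝ)
    (η : Fin 2 → ℝ) (l : ℝ)
    (hu : ContDiff ℝ 2 u) (hE1 : ContDiff ℝ 1 E1) (hE2 : ContDiff ℝ 1 E2)
    (ha : ContDiff ℝ 1 a)
    (himm : ∀ x, Function.Injective (fderiv ℝ u x))
    (hE1n : ∀ x, ∀ i, ∑ k, pd4 u x i k * E1 x k = 0)
    (hE2n : ∀ x, ∀ i, ∑ k, pd4 u x i k * E2 x k = 0)
    (hE1u : ∀ x, ∑ k, (E1 x k) ^ 2 = 1) (hE2u : ∀ x, ∑ k, (E2 x k) ^ 2 = 1)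
    (hE12 : ∀ x, ∑ k, E1 x k * E2 x k = 0)
    (hη : ∑ i, (η i) ^ 2 = 1) (hl : 0 < l) :
    ∀ x : Fin 2 → ℝ,
      gramFG (nashSpiral u E1 E2 a η l) (nashSpiral u E1 E2 a η l) x - gramFG u u x
      = (a x) ^ 2 • outerM η η
        -- the remainder R, each of whose terms carries at least one factor 1/λ:
        + (2 * Real.sin (l * ∑ i, x i * η i) / l * a x) • symM (gramFG u E1 x)
        + (2 * Real.cos (l * ∑ i, x i * η i) / l * a x) • symM (gramFG u E2 x)
        + (2 / l * (a x) ^ 2) •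
            symM (outerM (fun i => ∑ k, pd4 E2 x i k * E1 x k) η)
        + ((Real.sin (l * ∑ i, x i * η i)) ^ 2 / l ^ 2 * (a x) ^ 2) • gramFG E1 E1 x
        + ((Real.cos (l * ∑ i, x i * η i)) ^ 2 / l ^ 2 * (a x) ^ 2) • gramFG E2 E2 x
        + (2 * Real.sin (l * ∑ i, x i * η i) * Real.cos (l * ∑ i, x i * η i) / l ^ 2 *
            (a x) ^ 2) • symM (gramFG E1 E2 x)
        + (1 / l ^ 2) • outerM (pdS a x) (pdS a x) :=
  stmt4_general u E1 E2 a η l hu hE1 hE2 ha hE1n hE2n hE1u hE2u hE12 hl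
end

section
/- Suppose a sequence of numbers δₙ = a^{−bⁿ} and frequencies μₙ = a^{τ + (bⁿ−1)/(2θ)} with a, b > 1, θ ∈ (0,1), τ > 0, and a sequence of maps uₙ satisfies ‖u_{n+1} − uₙ‖₁ ≤ C δₙ^{1/2} and ‖u_{n+1} − uₙ‖₂ ≤ C δ_{n+1}^{1/2} μ_{n+1} for all n. Then for every α with 0 < α < θ, if b − 1 is sufficiently small, the sequence (uₙ) is Cauchy in C^{1,α}; more precisely ‖u_{n+1} − uₙ‖_{1,α} ≤ C a^{(τ − 1/(2θ))α} a^{−bⁿ q} where q = (1−α)/2 − bα(1/(2θ) − 1/2) > 0. -/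
/-!
Interpolating the two bounds on `u (n + 1) - u n` with weights `α` and `1 - α` adds up the
exponents of `a`: the doubly exponential terms `b ^ n` and `b ^ (n + 1)` combine into
`-(b ^ n) * q` with `q = (1 - α) / 2 - b α (1 / (2θ) - 1 / 2)`. At `b = 1` this is
`q = (θ - α) / (2θ) > 0`, so `q > 0` for `b` close to `1`, and then Bernoulli's inequality
`b ^ n ≥ 1 + n (b - 1)` dominates `a ^ (-(b ^ n) q)` by a geometric series.
-/

open Topology

noncomputable section

/-- The decay rate `q` of the increments in `C^{1,α}`. -/
def decayExponent (α θ b : ℝ) : ℝ := (1 - α) / 2 - b * α * (1 / (2 * θ) - 1 / 2)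

lemma decayExponent_one {α θ : ℝ} (hθ : θ ≠ 0) : decayExponent α θ 1 = (θ - α) / (2 * θ) := by
  unfold decayExponent
  field_simp
  ring

lemma eventually_decayExponent_pos {α θ : ℝ} (hθ : 0 < θ) (hαθ : α < θ) :
    ∀ᶠ b in 𝓝 1, 0 < decayExponent α θ b := by
  have hcont : Continuous (decayExponent α θ) := by unfold decayExponent; fun_prop
  have hpos : 0 < decayExponent α θ 1 := by
    rw [decayExponent_one hθ.ne']
    exact div_pos (by linarith) (by linarith)
  exact hcont.continuousAt.eventually (lt_mem_nhds hpos)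

lemma mul_rpow_mul_rpow_one_sub_le {C x y A B α : ℝ} (hC : 0 ≤ C) (hx : 0 ≤ x) (hxA : x ≤ A)
    (hy : 0 ≤ y) (hyB : y ≤ B) (hα0 : 0 ≤ α) (hα1 : α ≤ 1) :
    C * y ^ α * x ^ (1 - α) ≤ C * B ^ α * A ^ (1 - α) := by
  have : 0 ≤ 1 - α := by linarith
  have : 0 ≤ B ^ α := Real.rpow_nonneg (hy.trans hyB) α
  gcongr

lemma mul_rpow_mul_mul_rpow_one_sub {c a : ℝ} (hc : 0 ≤ c) (ha : 0 < a) (p r α : ℝ) :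
    (c * a ^ p) ^ α * (c * a ^ r) ^ (1 - α) = c * a ^ (p * α + r * (1 - α)) := by
  have hcα : c ^ α * c ^ (1 - α) = c := by
    rw [← Real.rpow_add' hc (by norm_num : α + (1 - α) ≠ 0)]
    norm_num
  rw [Real.mul_rpow hc (Real.rpow_nonneg ha.le _), Real.mul_rpow hc (Real.rpow_nonneg ha.le _),
    ← Real.rpow_mul ha.le, ← Real.rpow_mul ha.le, Real.rpow_add ha]
  calc _ = (c ^ α * c ^ (1 - α)) * (a ^ (p * α) * a ^ (r * (1 - α))) := by ring
    _ = _ := by rw [hcα]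

lemma interpolated_exponent_eq {α θ τ b : ℝ} (hθ : θ ≠ 0) (n : ℕ) :
    (-(b ^ (n + 1)) / 2 + (τ + (b ^ (n + 1) - 1) / (2 * θ))) * α + -(b ^ n) / 2 * (1 - α) =
      (τ - 1 / (2 * θ)) * α + -(b ^ n) * decayExponent α θ b := by
  unfold decayExponent
  rw [pow_succ]
  field_simp
  ring

/-- The interpolation step for one increment, on the level of the real numbers
`x = ‖v‖₁`, `y = ‖v‖₂`, `z = ‖v‖_{1,α}`. -/
lemma interpolated_increment_le {a θ τ α b Cb Cint x y z : ℝ} (ha : 0 < a) (hθ : θ ≠ 0)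
    (hα0 : 0 ≤ α) (hα1 : α ≤ 1) (hCb : 0 ≤ Cb) (hCi : 0 ≤ Cint) (hx : 0 ≤ x) (hy : 0 ≤ y)
    (hz : z ≤ Cint * y ^ α * x ^ (1 - α)) (n : ℕ)
    (hxn : x ≤ Cb * a ^ (-(b ^ n) / 2))
    (hyn : y ≤ Cb * a ^ (-(b ^ (n + 1)) / 2) * a ^ (τ + (b ^ (n + 1) - 1) / (2 * θ))) :
    z ≤ Cint * Cb * a ^ ((τ - 1 / (2 * θ)) * α) * a ^ (-(b ^ n) * decayExponent α θ b) := by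
  rw [mul_assoc Cb, ← Real.rpow_add ha] at hyn
  calc z ≤ Cint * y ^ α * x ^ (1 - α) := hz
    _ ≤ Cint * (Cb * a ^ (-(b ^ (n + 1)) / 2 + (τ + (b ^ (n + 1) - 1) / (2 * θ)))) ^ α *
          (Cb * a ^ (-(b ^ n) / 2)) ^ (1 - α) :=
        mul_rpow_mul_rpow_one_sub_le hCi hx hxn hy hyn hα0 hα1
    _ = Cint * Cb * a ^ ((τ - 1 / (2 * θ)) * α) * a ^ (-(b ^ n) * decayExponent α θ b) := by
        rw [mul_assoc Cint, mul_rpow_mul_mul_rpow_one_sub hCb ha, interpolated_exponent_eq hθ,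
          Real.rpow_add ha]
        ring

lemma summable_rpow_neg_pow_mul {a b q : ℝ} (ha : 1 < a) (hb : 1 < b) (hq : 0 < q) :
    Summable fun n : ℕ => a ^ (-(b ^ n) * q) := by
  have ha0 : 0 < a := by linarith
  have hgeom : Summable fun n : ℕ => (a ^ (-(b - 1) * q)) ^ n :=
    summable_geometric_of_lt_one (Real.rpow_nonneg ha0.le _)
      (Real.rpow_lt_one_of_one_lt_of_neg ha (by nlinarith))
  refine hgeom.of_nonneg_of_le (fun n => Real.rpow_nonneg ha0.le _) fun n => ?_
  have hbernoulli : 1 + n * (b - 1) ≤ b ^ n := by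
    simpa using one_add_mul_le_pow (show (-2 : ℝ) ≤ b - 1 by linarith) n
  rw [← Real.rpow_natCast (a ^ (-(b - 1) * q)) n, ← Real.rpow_mul ha0.le]
  exact Real.rpow_le_rpow_of_exponent_le ha.le (by nlinarith)

end

theorem stmt14_general (a θ τ α Cb Cint : ℝ) (ha : 1 < a) (hθ0 : 0 < θ) (hθ1 : θ < 1)
    (hα0 : 0 < α) (hαθ : α < θ) (hCb : 0 ≤ Cb) (hCi : 0 ≤ Cint) :
    ∃ ε > (0 : ℝ), ∀ b : ℝ, 1 < b → b < 1 + ε →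
      (0 < (1 - α) / 2 - b * α * (1 / (2 * θ) - 1 / 2)) ∧
      ∀ (V : Type) (_ : AddCommGroup V) (n1 n2 na : V → ℝ),
        (∀ v, 0 ≤ n1 v) → (∀ v, 0 ≤ n2 v) → (∀ v, 0 ≤ na v) →
        -- interpolation inequality ‖v‖_{1,α} ≤ C ‖v‖₂^α ‖v‖₁^{1−α}
        (∀ v, na v ≤ Cint * (n2 v) ^ α * (n1 v) ^ (1 - α)) →
        ∀ u : ℕ → V,
          (∀ n : ℕ, n1 (u (n + 1) - u n) ≤ Cb * a ^ (-(b ^ n) / 2)) →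
          (∀ n : ℕ, n2 (u (n + 1) - u n) ≤
            Cb * a ^ (-(b ^ (n + 1)) / 2) * a ^ (τ + (b ^ (n + 1) - 1) / (2 * θ))) →
          ∃ C' : ℝ, 0 ≤ C' ∧
            (∀ n : ℕ, na (u (n + 1) - u n) ≤
              C' * a ^ ((τ - 1 / (2 * θ)) * α) *
                a ^ (-(b ^ n) * ((1 - α) / 2 - b * α * (1 / (2 * θ) - 1 / 2)))) ∧
            Summable (fun n : ℕ => na (u (n + 1) - u n)) := by
  obtain ⟨ε, hε, hpos⟩ := Metric.eventually_nhds_iff.mp (eventually_decayExponent_pos hθ0 hαθ)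
  refine ⟨ε, hε, fun b hb1 hbε => ?_⟩
  have hq : 0 < decayExponent α θ b := hpos (by rw [Real.dist_eq, abs_lt]; constructor <;> linarith)
  refine ⟨hq, fun V _ n1 n2 na hn1 hn2 hna hinterp u hu1 hu2 => ?_⟩
  have hstep (n : ℕ) := interpolated_increment_le (by linarith) hθ0.ne' hα0.le (by linarith)
    hCb hCi (hn1 _) (hn2 _) (hinterp (u (n + 1) - u n)) n (hu1 n) (hu2 n)
  refine ⟨Cint * Cb, mul_nonneg hCi hCb, hstep, ?_⟩
  exact ((summable_rpow_neg_pow_mul ha hb1 hq).mul_left _).of_nonneg_of_le (fun n => hna _) hstep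

theorem stmt14 (a θ τ α Cb Cint : ℝ) (ha : 1 < a) (hθ0 : 0 < θ) (hθ1 : θ < 1)
    (hτ : 0 < τ) (hα0 : 0 < α) (hαθ : α < θ) (hCb : 0 ≤ Cb) (hCi : 0 ≤ Cint) :
    ∃ ε > (0 : ℝ), ∀ b : ℝ, 1 < b → b < 1 + ε →
      (0 < (1 - α) / 2 - b * α * (1 / (2 * θ) - 1 / 2)) ∧
      ∀ (V : Type) (_ : AddCommGroup V) (n1 n2 na : V → ℝ),
        (∀ v, 0 ≤ n1 v) → (∀ v, 0 ≤ n2 v) → (∀ v, 0 ≤ na v) →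
        -- interpolation inequality ‖v‖_{1,α} ≤ C ‖v‖₂^α ‖v‖₁^{1−α}
        (∀ v, na v ≤ Cint * (n2 v) ^ α * (n1 v) ^ (1 - α)) →
        ∀ u : ℕ → V,
          (∀ n : ℕ, n1 (u (n + 1) - u n) ≤ Cb * a ^ (-(b ^ n) / 2)) →
          (∀ n : ℕ, n2 (u (n + 1) - u n) ≤
            Cb * a ^ (-(b ^ (n + 1)) / 2) * a ^ (τ + (b ^ (n + 1) - 1) / (2 * θ))) →
          ∃ C' : ℝ, 0 ≤ C' ∧
            (∀ n : ℕ, na (u (n + 1) - u n) ≤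
              C' * a ^ ((τ - 1 / (2 * θ)) * α) *
                a ^ (-(b ^ n) * ((1 - α) / 2 - b * α * (1 / (2 * θ) - 1 / 2)))) ∧
            Summable (fun n : ℕ => na (u (n + 1) - u n)) :=
  stmt14_general a θ τ α Cb Cint ha hθ0 hθ1 hα0 hαθ hCb hCi
end

section
/- Let aᵢⱼ, aᵢ,ⱼ₋₁ : ω̄ → ℝ be continuous with 1/2 ≤ aᵢⱼ, aᵢ,ⱼ₋₁ ≤ 3/2 and suppose ‖∇^{(m)}(a²ᵢⱼ − a²ᵢ,ⱼ₋₁)‖₀ ≤ C μ^m ε and ‖∇^{(m)}aᵢⱼ‖₀, ‖∇^{(m)}aᵢ,ⱼ₋₁‖₀ ≤ C μ^m for m = 0,…,M (derivatives existing). Then ‖∇^{(m)}(aᵢⱼ − aᵢ,ⱼ₋₁)‖₀ ≤ C′ μ^m ε for all m = 0,…,M, with C′ depending only on C and M. -/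
/-!
Freeze `c = a x + b x ≥ 1` at the point `x`. Then `c • (a - b) = (a² - b²) - (a - b) (a + b - c)`,
and in the Leibniz expansion of the last product at `x` the term carrying the top derivative of
`a - b` is multiplied by `(a + b - c) x = 0`. Dividing by `c` thus bounds the `n`-th derivative of
`a - b` by that of `a² - b²` plus lower derivatives of `a - b`, and induction on `n` concludes;
no derivative of the reciprocal `1 / (a + b)` is needed.
-/

open Finset

def leibnizConst (A B : ℝ) (n : ℕ) : ℝ :=
  A + B * ∑ i : Fin n, (n.choose i : ℝ) * leibnizConst A B i

theorem leibnizConst_eq (A B : ℝ) (n : ℕ) :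
    leibnizConst A B n = A + B * ∑ i ∈ range n, (n.choose i : ℝ) * leibnizConst A B i := by
  rw [leibnizConst, Fin.sum_univ_eq_sum_range (fun i => (n.choose i : ℝ) * leibnizConst A B i)]

theorem le_leibnizConst {A B : ℝ} (hA : 0 ≤ A) (hB : 0 ≤ B) (n : ℕ) :
    A ≤ leibnizConst A B n := by
  induction n using Nat.strong_induction_on with
  | _ n ih =>
    have hsum : 0 ≤ ∑ i ∈ range n, (n.choose i : ℝ) * leibnizConst A B i :=
      sum_nonneg fun i hi => mul_nonneg (Nat.cast_nonneg _) (hA.trans (ih i (mem_range.mp hi)))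
    rw [leibnizConst_eq]
    exact le_add_of_nonneg_right (mul_nonneg hB hsum)

theorem le_leibnizConst_mul_pow_mul {A B μ ε : ℝ} (hB : 0 ≤ B) (hμ : 0 ≤ μ) {u : ℕ → ℝ} {N : ℕ}
    (hu : ∀ n ≤ N, u n ≤ A * μ ^ n * ε +
      ∑ i ∈ range n, (n.choose i : ℝ) * u i * (B * μ ^ (n - i))) :
    ∀ n ≤ N, u n ≤ leibnizConst A B n * μ ^ n * ε := by
  intro n
  induction n using Nat.strong_induction_on with
  | _ n ih =>
    intro hn
    calc u n ≤ A * μ ^ n * ε + ∑ i ∈ range n, (n.choose i : ℝ) * u i * (B * μ ^ (n - i)) :=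
          hu n hn
      _ ≤ A * μ ^ n * ε + ∑ i ∈ range n,
            (n.choose i : ℝ) * (leibnizConst A B i * μ ^ i * ε) * (B * μ ^ (n - i)) := by
          gcongr with i hi
          exact ih i (mem_range.mp hi) (by grind)
      _ = leibnizConst A B n * μ ^ n * ε := by
          rw [leibnizConst_eq, mul_sum, add_mul, add_mul, sum_mul, sum_mul]
          congr 1
          refine sum_congr rfl fun i hi => ?_
          rw [← pow_sub_mul_pow μ (mem_range.mp hi).le]
          ring

theorem norm_mul_norm_iteratedFDeriv_le_add_sum {𝕜 E : Type*} [NontriviallyNormedField 𝕜]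
    [NormedAddCommGroup E] [NormedSpace 𝕜 E] {f g : E → 𝕜} {n : ℕ}
    (hf : ContDiff 𝕜 n f) (hg : ContDiff 𝕜 n g) (x : E) :
    ‖g x‖ * ‖iteratedFDeriv 𝕜 n f x‖ ≤ ‖iteratedFDeriv 𝕜 n (fun y => f y * g y) x‖ +
      ∑ i ∈ range n, (n.choose i : ℝ) * ‖iteratedFDeriv 𝕜 i f x‖ *
        ‖iteratedFDeriv 𝕜 (n - i) g x‖ := by
  have hg₀ : ContDiff 𝕜 n (fun y => g y - g x) := hg.sub contDiff_const
  have hsplit : g x • iteratedFDeriv 𝕜 n f x = iteratedFDeriv 𝕜 n (fun y => f y * g y) x -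
      iteratedFDeriv 𝕜 n (fun y => f y * (g y - g x)) x := by
    rw [← iteratedFDeriv_const_smul_apply' hf.contDiffAt,
      ← fun_iteratedFDeriv_sub_apply (hf.mul hg).contDiffAt (hf.mul hg₀).contDiffAt]
    congr 1
    ext y
    simp only [smul_eq_mul]
    ring
  have hlower : ∀ i ∈ range n,
      iteratedFDeriv 𝕜 (n - i) (fun y => g y - g x) x = iteratedFDeriv 𝕜 (n - i) g x := by
    intro i hi
    have hni : n - i ≠ 0 := by grind
    rw [fun_iteratedFDeriv_sub_apply (hg.of_le (by exact_mod_cast n.sub_le i)).contDiffAt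
      contDiff_const.contDiffAt, iteratedFDeriv_const_of_ne hni, Pi.zero_apply, sub_zero]
  calc ‖g x‖ * ‖iteratedFDeriv 𝕜 n f x‖ = ‖g x • iteratedFDeriv 𝕜 n f x‖ := (norm_smul _ _).symm
    _ ≤ ‖iteratedFDeriv 𝕜 n (fun y => f y * g y) x‖ +
        ‖iteratedFDeriv 𝕜 n (fun y => f y * (g y - g x)) x‖ := hsplit ▸ norm_sub_le _ _
    _ ≤ _ := by
      gcongr
      refine (norm_iteratedFDeriv_mul_le hf hg₀ x le_rfl).trans_eq ?_
      rw [sum_range_succ, Nat.sub_self, norm_iteratedFDeriv_zero, sub_self, norm_zero, mul_zero,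
        add_zero]
      exact sum_congr rfl fun i hi => by rw [hlower i hi]

theorem norm_iteratedFDeriv_sub_le_of_one_le_add {E : Type*} [NormedAddCommGroup E]
    [NormedSpace ℝ E] {a b : E → ℝ} {n : ℕ} (ha : ContDiff ℝ n a) (hb : ContDiff ℝ n b) {x : E}
    (hab : 1 ≤ a x + b x) :
    ‖iteratedFDeriv ℝ n (fun y => a y - b y) x‖ ≤
      ‖iteratedFDeriv ℝ n (fun y => a y ^ 2 - b y ^ 2) x‖ +
      ∑ i ∈ range n, (n.choose i : ℝ) * ‖iteratedFDeriv ℝ i (fun y => a y - b y) x‖ *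
        ‖iteratedFDeriv ℝ (n - i) (fun y => a y + b y) x‖ := by
  have hsq : (fun y => a y ^ 2 - b y ^ 2) = fun y => (a y - b y) * (a y + b y) := by
    ext y; ring
  rw [hsq]
  refine le_trans ?_ (norm_mul_norm_iteratedFDeriv_le_add_sum (ha.sub hb) (ha.add hb) x)
  rw [Real.norm_eq_abs, abs_of_pos (by linarith)]
  exact le_mul_of_one_le_left (norm_nonneg _) hab

theorem stmt18 (C : ℝ) (M : ℕ) (hC : 0 < C) :
    ∃ C' : ℝ, 0 < C' ∧
      ∀ (ω : Set (Fin 2 → ℝ)) (a b : (Fin 2 → ℝ) → ℝ),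
        ContDiff ℝ (M : ℕ) a → ContDiff ℝ (M : ℕ) b →
        ∀ μ ε : ℝ, 1 < μ → 0 < ε → ε < 1 →
        (∀ x ∈ closure ω, 1 / 2 ≤ a x ∧ a x ≤ 3 / 2) →
        (∀ x ∈ closure ω, 1 / 2 ≤ b x ∧ b x ≤ 3 / 2) →
        (∀ m ≤ M, ∀ x ∈ closure ω,
          ‖iteratedFDeriv ℝ m (fun y => (a y) ^ 2 - (b y) ^ 2) x‖ ≤ C * μ ^ m * ε) →
        (∀ m ≤ M, ∀ x ∈ closure ω, ‖iteratedFDeriv ℝ m a x‖ ≤ C * μ ^ m) →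
        (∀ m ≤ M, ∀ x ∈ closure ω, ‖iteratedFDeriv ℝ m b x‖ ≤ C * μ ^ m) →
        ∀ m ≤ M, ∀ x ∈ closure ω,
          ‖iteratedFDeriv ℝ m (fun y => a y - b y) x‖ ≤ C' * μ ^ m * ε := by
  have hK : ∀ m, C ≤ leibnizConst C (2 * C) m := le_leibnizConst hC.le (by positivity)
  refine ⟨∑ m ∈ range (M + 1), leibnizConst C (2 * C) m,
    sum_pos (fun m _ => hC.trans_le (hK m)) nonempty_range_add_one, ?_⟩
  intro ω a b ha hb μ ε hμ hε _ ha_bd hb_bd hsq hda hdb m hm x hx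
  have hadd : ∀ n ≤ M, ‖iteratedFDeriv ℝ n (fun y => a y + b y) x‖ ≤ 2 * C * μ ^ n := by
    intro n hn
    have hn' : (n : WithTop ℕ∞) ≤ M := by exact_mod_cast hn
    rw [fun_iteratedFDeriv_add_apply (ha.of_le hn').contDiffAt (hb.of_le hn').contDiffAt]
    linarith [norm_add_le (iteratedFDeriv ℝ n a x) (iteratedFDeriv ℝ n b x),
      hda n hn x hx, hdb n hn x hx]
  have hrec : ∀ n ≤ M, ‖iteratedFDeriv ℝ n (fun y => a y - b y) x‖ ≤ C * μ ^ n * ε +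
      ∑ i ∈ range n, (n.choose i : ℝ) * ‖iteratedFDeriv ℝ i (fun y => a y - b y) x‖ *
        (2 * C * μ ^ (n - i)) := by
    intro n hn
    have hn' : (n : WithTop ℕ∞) ≤ M := by exact_mod_cast hn
    refine (norm_iteratedFDeriv_sub_le_of_one_le_add (ha.of_le hn') (hb.of_le hn')
      (by linarith [ha_bd x hx, hb_bd x hx])).trans ?_
    gcongr with i hi
    · exact hsq n hn x hx
    · exact hadd _ ((n.sub_le i).trans hn)
  calc ‖iteratedFDeriv ℝ m (fun y => a y - b y) x‖ ≤ leibnizConst C (2 * C) m * μ ^ m * ε :=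
        le_leibnizConst_mul_pow_mul (by positivity) (by positivity) hrec m hm
    _ ≤ _ := by
        gcongr
        exact single_le_sum (fun i _ => hC.le.trans (hK i)) (mem_range_succ_iff.mpr hm)
end
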